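/- Fix m > 0, α > 0, 0 < R₁ < R₂ < R, P_T > 0, 𝒩 > 0, γ > 0 and ξ₁, ξ₂ > 0. Let g have Gamma density m^m·g^{m−1}·e^{−m·g}/Γ(m) on (0, ∞). (i) If r is independent of g with density 2r/(R₂² − R₁²) on [R₁, R₂], then P( P_T·ξ₁·g²·r^{−2α} ≥ γ·𝒩 ) = [ R₂²·Γ[m, m·R₂^{α}·√x] − R₁²·Γ[m, m·R₁^{α}·√x] + (m·√x)^{−2/α}·Γ[m + 2/α, m·R₁^{α}·√x, m·R₂^{α}·√x] ] / ( (R₂² − R₁²)·Γ(m) ) with x = 𝒩·γ/(P_T·ξ₁). (ii) If instead r has density 2r/(R² − R₂²) on [R₂, R], then P( P_T·ξ₂·g²·r^{−2α} ≥ γ·𝒩 ) equals the same expression with R₁, R₂ replaced by R₂, R and x = 𝒩·γ/(P_T·ξ₂). -/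

import Mathlib

open MeasureTheory Set Real

/-- Upper incomplete gamma function `Γ[a, x₀] = ∫_{x₀}^{∞} t^{a−1} e^{−t} dt`. -/
noncomputable def uGamma (a x₀ : ℝ) : ℝ := ∫ t in Set.Ioi x₀, t ^ (a - 1) * Real.exp (-t)

/-- Generalized incomplete gamma function `Γ[a, x₀, x₁] = ∫_{x₀}^{x₁} t^{a−1} e^{−t} dt`. -/
noncomputable def gGamma (a x₀ x₁ : ℝ) : ℝ := ∫ t in x₀..x₁, t ^ (a - 1) * Real.exp (-t)

private lemma gammaTail {m y : ℝ} (hm : 0 < m) (hy : 0 ≤ y) :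
    IntegrableOn (fun t : ℝ => t ^ (m - 1) * Real.exp (-t)) (Set.Ioi y) :=
  ((Real.GammaIntegral_convergent hm).mono_set (Set.Ioi_subset_Ioi hy)).congr_fun
    (fun _ _ => mul_comm _ _) measurableSet_Ioi

private lemma hmm_pow {m : ℝ} (hm : 0 < m) : m * m ^ (m - 1) = m ^ m := by
  have h := Real.rpow_add hm 1 (m - 1)
  rw [Real.rpow_one] at h
  rw [← h]; norm_num

private lemma inner_eval (A B c F D : ℝ) (hA : 0 < A) (hAB : A ≤ B)
    (P : ℝ → Prop) [DecidablePred P] (hP : ∀ r : ℝ, 0 < r → (P r ↔ r ≤ c)) :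
    (∫ r in A..B, if P r then F * (2 * r / D) else 0)
      = F * ((min B (max A c)) ^ 2 - A ^ 2) / D := by
  set ρ := min B (max A c) with hρdef
  have hρ1 : A ≤ ρ := le_min hAB (le_max_left _ _)
  have hρ2 : ρ ≤ B := min_le_left _ _
  have hii : ∀ a b : ℝ, A ≤ a → a ≤ b →
      IntervalIntegrable (fun r => if P r then F * (2 * r / D) else 0) volume a b := by
    intro a b ha hab
    rw [intervalIntegrable_iff_integrableOn_Ioc_of_le hab]
    have hbase : IntegrableOn ((Set.Iic c).indicator fun r => F * (2 * r / D))
        (Set.Ioc a b) :=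
      ((continuous_const.mul ((continuous_const.mul continuous_id).div_const
        _)).integrableOn_Ioc).indicator measurableSet_Iic
    refine hbase.congr_fun (fun r hr => ?_) measurableSet_Ioc
    have hr0 : 0 < r := lt_of_lt_of_le hA (le_trans ha hr.1.le)
    by_cases h : r ≤ c
    · rw [Set.indicator_of_mem (Set.mem_Iic.mpr h), if_pos ((hP r hr0).mpr h)]
    · rw [Set.indicator_of_notMem (fun hh => h (Set.mem_Iic.mp hh)), if_neg fun hc' => h ((hP r hr0).mp hc')]
  rw [← intervalIntegral.integral_add_adjacent_intervals (hii A ρ le_rfl hρ1) (hii ρ B hρ1 hρ2)]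
  have h1 : (∫ r in A..ρ, if P r then F * (2 * r / D) else 0)
      = F * (ρ ^ 2 - A ^ 2) / D := by
    rw [intervalIntegral.integral_of_le hρ1,
      setIntegral_congr_fun measurableSet_Ioc
        (g := fun r : ℝ => F * 2 / D * r) (fun r hr => ?_),
      ← intervalIntegral.integral_of_le hρ1, intervalIntegral.integral_const_mul,
      integral_id]
    · ring
    · have hr0 : 0 < r := lt_trans hA hr.1
      have hrc : r ≤ c := by
        rcases le_max_iff.mp (le_trans hr.2 (min_le_right _ _)) with h | h
        · exact absurd h (not_le.mpr hr.1)
        · exact h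
      rw [if_pos ((hP r hr0).mpr hrc)]; ring
  have h2 : (∫ r in ρ..B, if P r then F * (2 * r / D) else 0) = 0 := by
    rw [intervalIntegral.integral_of_le hρ2,
      setIntegral_congr_fun measurableSet_Ioc (g := fun _ : ℝ => (0:ℝ)) (fun r hr => ?_),
      integral_zero]
    have hr0 : 0 < r := lt_of_lt_of_le hA (le_trans hρ1 hr.1.le)
    have hcr : c < r := by
      rcases min_lt_iff.mp hr.1 with h | h
      · exact absurd hr.2 (not_le.mpr h)
      · exact lt_of_le_of_lt (le_max_right _ _) h
    exact if_neg fun hh => absurd ((hP r hr0).mp hh) (not_le.mpr hcr)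
  rw [h1, h2, add_zero]

private lemma key (m α A B PT Noise γ ξ : ℝ)
    (hm : 0 < m) (hα : 0 < α) (hA : 0 < A) (hAB : A < B)
    (hPT : 0 < PT) (hNoise : 0 < Noise) (hγ : 0 < γ) (hξ : 0 < ξ) :
    (∫ g in Set.Ioi (0 : ℝ), ∫ r in A..B,
        if γ * Noise ≤ PT * ξ * (g ^ 2 * r ^ (-(2 * α)))
        then m ^ m * g ^ (m - 1) * Real.exp (-m * g) / Real.Gamma m *
          (2 * r / (B ^ 2 - A ^ 2)) else 0) =
      (B ^ 2 * uGamma m (m * B ^ α * Real.sqrt (Noise * γ / (PT * ξ)))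
        - A ^ 2 * uGamma m (m * A ^ α * Real.sqrt (Noise * γ / (PT * ξ)))
        + (m * Real.sqrt (Noise * γ / (PT * ξ))) ^ (-(2 / α)) *
          gGamma (m + 2 / α) (m * A ^ α * Real.sqrt (Noise * γ / (PT * ξ)))
            (m * B ^ α * Real.sqrt (Noise * γ / (PT * ξ)))) /
        ((B ^ 2 - A ^ 2) * Real.Gamma m) := by
  have hx : (0:ℝ) < Noise * γ / (PT * ξ) := by positivity
  set s : ℝ := Real.sqrt (Noise * γ / (PT * ξ)) with hsdef
  have hs : 0 < s := Real.sqrt_pos.mpr hx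
  have hs2 : s ^ 2 = Noise * γ / (PT * ξ) := Real.sq_sqrt hx.le
  have hΓ : 0 < Real.Gamma m := Real.Gamma_pos_of_pos hm
  have hB : 0 < B := lt_trans hA hAB
  have hden : 0 < B ^ 2 - A ^ 2 := by nlinarith
  set g1 : ℝ := s * A ^ α with hg1def
  set g2 : ℝ := s * B ^ α with hg2def
  have hg1 : 0 < g1 := by positivity
  have hg2 : 0 < g2 := by positivity
  have hg12 : g1 ≤ g2 :=
    mul_le_mul_of_nonneg_left (Real.rpow_le_rpow hA.le hAB.le hα.le) hs.le
  have hPTξ : (0 : ℝ) < PT * ξ := by positivity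
  -- the condition characterization
  have hcond : ∀ g r : ℝ, 0 < g → 0 < r →
      ((γ * Noise ≤ PT * ξ * (g ^ 2 * r ^ (-(2 * α)))) ↔ r ≤ (g / s) ^ α⁻¹) := by
    intro g r hg hr
    have hrα : (0 : ℝ) < r ^ α := Real.rpow_pos_of_pos hr α
    have hR : r ^ (-(2 * α)) = ((r ^ α) ^ 2)⁻¹ := by
      rw [← Real.rpow_two, ← Real.rpow_mul hr.le, ← Real.rpow_neg hr.le, mul_comm α 2]
    have key1 : (γ * Noise ≤ PT * ξ * (g ^ 2 * r ^ (-(2 * α)))) ↔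
        (r ^ α) ^ 2 * (Noise * γ / (PT * ξ)) ≤ g ^ 2 := by
      rw [hR, show PT * ξ * (g ^ 2 * ((r ^ α) ^ 2)⁻¹) = PT * ξ * g ^ 2 / (r ^ α) ^ 2 from by
            field_simp,
          le_div_iff₀ (by positivity),
          show (r ^ α) ^ 2 * (Noise * γ / (PT * ξ)) = γ * Noise * (r ^ α) ^ 2 / (PT * ξ) from by
            ring, div_le_iff₀ hPTξ, mul_comm (g ^ 2) (PT * ξ)]
    have key2 : (r ^ α) ^ 2 * (Noise * γ / (PT * ξ)) ≤ g ^ 2 ↔ r ^ α ≤ g / s := by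
      rw [← Real.rpow_le_rpow_iff hrα.le (by positivity : (0:ℝ) ≤ g / s) (by norm_num : (0:ℝ) < 2),
          Real.rpow_two, Real.rpow_two, div_pow, ← hs2, le_div_iff₀ (by positivity)]
    have key3 : r ^ α ≤ g / s ↔ r ≤ (g / s) ^ α⁻¹ := by
      rw [← Real.rpow_le_rpow_iff hr.le (Real.rpow_nonneg (by positivity) _) hα,
          ← Real.rpow_mul (by positivity : (0:ℝ) ≤ g / s), inv_mul_cancel₀ hα.ne', Real.rpow_one]
    exact key1.trans (key2.trans key3)
  have hthr : ∀ K g : ℝ, 0 < K → 0 < g → ((g / s) ^ α⁻¹ ≤ K ↔ g ≤ s * K ^ α) := by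
    intro K g hK hg
    rw [← Real.rpow_le_rpow_iff (Real.rpow_nonneg (by positivity) _) hK.le hα,
        ← Real.rpow_mul (by positivity : (0:ℝ) ≤ g / s), inv_mul_cancel₀ hα.ne',
        Real.rpow_one, div_le_iff₀ hs, mul_comm (K ^ α) s]
  have hthr' : ∀ K g : ℝ, 0 < K → 0 < g → (K ≤ (g / s) ^ α⁻¹ ↔ s * K ^ α ≤ g) := by
    intro K g hK hg
    rw [← Real.rpow_le_rpow_iff hK.le (Real.rpow_nonneg (by positivity) _) hα,
        ← Real.rpow_mul (by positivity : (0:ℝ) ≤ g / s), inv_mul_cancel₀ hα.ne',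
        Real.rpow_one, le_div_iff₀ hs, mul_comm (K ^ α) s]
  -- abbreviations
  set H : ℝ → ℝ := fun g => m ^ m * g ^ (m - 1) * Real.exp (-m * g) / Real.Gamma m *
      ((min B (max A ((g / s) ^ α⁻¹))) ^ 2 - A ^ 2) / (B ^ 2 - A ^ 2) with hHdef
  have hinner : ∀ g ∈ Set.Ioi (0:ℝ),
      (∫ r in A..B, if γ * Noise ≤ PT * ξ * (g ^ 2 * r ^ (-(2 * α)))
          then m ^ m * g ^ (m - 1) * Real.exp (-m * g) / Real.Gamma m *
            (2 * r / (B ^ 2 - A ^ 2)) else 0) = H g := by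
    intro g hg
    rw [show (∫ r in A..B, if γ * Noise ≤ PT * ξ * (g ^ 2 * r ^ (-(2 * α)))
          then m ^ m * g ^ (m - 1) * Real.exp (-m * g) / Real.Gamma m *
            (2 * r / (B ^ 2 - A ^ 2)) else 0)
        = m ^ m * g ^ (m - 1) * Real.exp (-m * g) / Real.Gamma m *
            ((min B (max A ((g / s) ^ α⁻¹))) ^ 2 - A ^ 2) / (B ^ 2 - A ^ 2) from
      inner_eval A B ((g / s) ^ α⁻¹) _ _ hA hAB.le _ (fun r hr => hcond g r hg hr)]
  rw [setIntegral_congr_fun measurableSet_Ioi hinner]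
  -- piecewise description of H
  have hHa : ∀ g ∈ Set.Ioc (0:ℝ) g1, H g = 0 := by
    intro g hg
    have hcA : (g / s) ^ α⁻¹ ≤ A := (hthr A g hA hg.1).mpr hg.2
    rw [hHdef]
    simp only [max_eq_left hcA, min_eq_right hAB.le, sub_self, mul_zero, zero_div]
  have hHb : ∀ g ∈ Set.Ioc g1 g2, H g
      = (m * (m * s) ^ (-(2 / α)) / Real.Gamma m / (B ^ 2 - A ^ 2)) *
          ((m * g) ^ (m + 2 / α - 1) * Real.exp (-(m * g)))
        - (m * A ^ 2 / Real.Gamma m / (B ^ 2 - A ^ 2)) *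
          ((m * g) ^ (m - 1) * Real.exp (-(m * g))) := by
    intro g hg
    have hg0 : 0 < g := lt_trans hg1 hg.1
    have h1 : A ≤ (g / s) ^ α⁻¹ := (hthr' A g hA hg0).mpr hg.1.le
    have h2 : (g / s) ^ α⁻¹ ≤ B := (hthr B g hB hg0).mpr hg.2
    have hmg : (0:ℝ) < m * g := by positivity
    have hcsq : (((g / s) ^ α⁻¹ : ℝ)) ^ 2 = g ^ (2 / α) / s ^ (2 / α) := by
      rw [← Real.rpow_two, ← Real.rpow_mul (by positivity : (0:ℝ) ≤ g / s),
        show α⁻¹ * 2 = 2 / α from by ring, Real.div_rpow hg0.le hs.le]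
    have e2 : (m * g) ^ (m + 2 / α - 1)
        = m ^ (m - 1) * g ^ (m - 1) * (m ^ (2 / α) * g ^ (2 / α)) := by
      rw [show m + 2 / α - 1 = (m - 1) + 2 / α from by ring, Real.rpow_add hmg,
        Real.mul_rpow hm.le hg0.le, Real.mul_rpow hm.le hg0.le]
    have e1 : (m * g) ^ (m - 1) = m ^ (m - 1) * g ^ (m - 1) :=
      Real.mul_rpow hm.le hg0.le
    have e3 : (m * s) ^ (-(2 / α)) = (m ^ (2 / α) * s ^ (2 / α))⁻¹ := by
      rw [Real.rpow_neg (by positivity : (0:ℝ) ≤ m * s), Real.mul_rpow hm.le hs.le]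
    have hq1 : (0:ℝ) < m ^ (2 / α) := Real.rpow_pos_of_pos hm _
    have hq3 : (0:ℝ) < s ^ (2 / α) := Real.rpow_pos_of_pos hs _
    rw [hHdef]
    simp only [max_eq_right h1, min_eq_right h2]
    rw [hcsq, e2, e1, e3, ← hmm_pow hm, show -(m * g) = -m * g from by ring]
    field_simp
  have hHc : ∀ g ∈ Set.Ioi g2, H g
      = m / Real.Gamma m * ((m * g) ^ (m - 1) * Real.exp (-(m * g))) := by
    intro g hg
    have hg0 : 0 < g := lt_trans hg2 hg
    have hBc : B ≤ (g / s) ^ α⁻¹ := (hthr' B g hB hg0).mpr (le_of_lt hg)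
    rw [hHdef]
    simp only [max_eq_right (le_trans hAB.le hBc), min_eq_left hBc]
    rw [mul_div_assoc, div_self hden.ne', mul_one, Real.mul_rpow hm.le hg0.le,
      ← hmm_pow hm, show -(m * g) = -m * g from by ring]
    ring
  -- continuity/integrability
  have hcont : ∀ p : ℝ, IntegrableOn (fun g : ℝ => (m * g) ^ p * Real.exp (-(m * g)))
      (Set.Ioc g1 g2) := by
    intro p
    apply (ContinuousOn.integrableOn_Icc ?_).mono_set Set.Ioc_subset_Icc_self
    apply ContinuousOn.mul
    · refine ContinuousOn.rpow_const ((continuous_const.mul continuous_id).continuousOn) ?_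
      exact fun g hg => Or.inl (ne_of_gt (mul_pos hm (lt_of_lt_of_le hg1 hg.1)))
    · exact (Real.continuous_exp.comp (continuous_const.mul continuous_id).neg).continuousOn
  have I_a : IntegrableOn H (Set.Ioc 0 g1) :=
    integrableOn_zero.congr_fun (fun g hg => (hHa g hg).symm) measurableSet_Ioc
  have I_b : IntegrableOn H (Set.Ioc g1 g2) := by
    have h : IntegrableOn (fun g : ℝ =>
        (m * (m * s) ^ (-(2 / α)) / Real.Gamma m / (B ^ 2 - A ^ 2)) *
          ((m * g) ^ (m + 2 / α - 1) * Real.exp (-(m * g)))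
        - (m * A ^ 2 / Real.Gamma m / (B ^ 2 - A ^ 2)) *
          ((m * g) ^ (m - 1) * Real.exp (-(m * g)))) (Set.Ioc g1 g2) :=
      ((hcont _).const_mul _).sub ((hcont _).const_mul _)
    exact h.congr_fun (fun g hg => (hHb g hg).symm) measurableSet_Ioc
  have I_c : IntegrableOn H (Set.Ioi g2) := by
    have h : IntegrableOn (fun g : ℝ =>
        m / Real.Gamma m * ((m * g) ^ (m - 1) * Real.exp (-(m * g)))) (Set.Ioi g2) :=
      ((integrableOn_Ioi_comp_mul_left_iff (fun t : ℝ => t ^ (m - 1) * Real.exp (-t)) g2 hm).mpr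
        (gammaTail hm (by positivity))).const_mul (m / Real.Gamma m)
    exact h.congr_fun (fun g hg => (hHc g hg).symm) measurableSet_Ioi
  have hU1 : Set.Ioc (0:ℝ) g2 ∪ Set.Ioi g2 = Set.Ioi 0 := Set.Ioc_union_Ioi_eq_Ioi hg2.le
  have hU2 : Set.Ioc (0:ℝ) g1 ∪ Set.Ioc g1 g2 = Set.Ioc 0 g2 :=
    Set.Ioc_union_Ioc_eq_Ioc hg1.le hg12
  rw [← hU1, setIntegral_union (Set.Ioc_disjoint_Ioi le_rfl) measurableSet_Ioi
      (by rw [← hU2]; exact I_a.union I_b) I_c, ← hU2,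
    setIntegral_union (Set.Ioc_disjoint_Ioc_of_le le_rfl) measurableSet_Ioc I_a I_b]
  -- values of the three pieces
  have Ea : ∫ g in Set.Ioc (0:ℝ) g1, H g = 0 := by
    rw [setIntegral_congr_fun measurableSet_Ioc hHa, integral_zero]
  have Ec : ∫ g in Set.Ioi g2, H g = m / Real.Gamma m * (m⁻¹ * uGamma m (m * g2)) := by
    rw [setIntegral_congr_fun measurableSet_Ioi hHc, MeasureTheory.integral_const_mul]
    congr 1
    have h := integral_comp_mul_left_Ioi (fun t : ℝ => t ^ (m - 1) * Real.exp (-t)) g2 hm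
    simpa [smul_eq_mul, uGamma] using h
  have hmg12 : m * g1 ≤ m * g2 := by nlinarith
  have Eb : ∫ g in Set.Ioc g1 g2, H g
      = (m * (m * s) ^ (-(2 / α)) / Real.Gamma m / (B ^ 2 - A ^ 2)) *
          (m⁻¹ * gGamma (m + 2 / α) (m * g1) (m * g2))
        - (m * A ^ 2 / Real.Gamma m / (B ^ 2 - A ^ 2)) *
          (m⁻¹ * (uGamma m (m * g1) - uGamma m (m * g2))) := by
    rw [setIntegral_congr_fun measurableSet_Ioc hHb,
      integral_sub ((hcont _).const_mul _) ((hcont _).const_mul _),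
      MeasureTheory.integral_const_mul, MeasureTheory.integral_const_mul]
    congr 2
    · rw [← intervalIntegral.integral_of_le hg12]
      have h := intervalIntegral.integral_comp_mul_left
        (fun t : ℝ => t ^ (m + 2 / α - 1) * Real.exp (-t)) (c := m) hm.ne' (a := g1) (b := g2)
      simpa [smul_eq_mul, gGamma] using h
    · rw [← intervalIntegral.integral_of_le hg12]
      have h := intervalIntegral.integral_comp_mul_left
        (fun t : ℝ => t ^ (m - 1) * Real.exp (-t)) (c := m) hm.ne' (a := g1) (b := g2)
      rw [h, smul_eq_mul]
      congr 1
      rw [intervalIntegral.integral_of_le hmg12]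
      have hsplit : (∫ t in Set.Ioc (m * g1) (m * g2) ∪ Set.Ioi (m * g2),
            t ^ (m - 1) * Real.exp (-t))
          = (∫ t in Set.Ioc (m * g1) (m * g2), t ^ (m - 1) * Real.exp (-t))
            + ∫ t in Set.Ioi (m * g2), t ^ (m - 1) * Real.exp (-t) :=
        setIntegral_union (Set.Ioc_disjoint_Ioi (le_refl (m * g2))) measurableSet_Ioi
          ((gammaTail hm (show (0:ℝ) ≤ m * g1 by positivity)).mono_set
            Set.Ioc_subset_Ioi_self)
          (gammaTail hm (show (0:ℝ) ≤ m * g2 by positivity))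
      rw [Set.Ioc_union_Ioi_eq_Ioi hmg12] at hsplit
      have hu1 : uGamma m (m * g1) = (∫ t in Set.Ioc (m * g1) (m * g2),
          t ^ (m - 1) * Real.exp (-t)) + uGamma m (m * g2) := hsplit
      linarith
  rw [Ea, Eb, Ec, hg1def, hg2def,
    show m * (s * A ^ α) = m * A ^ α * s from by ring,
    show m * (s * B ^ α) = m * B ^ α * s from by ring]
  field_simp
  ring

/-- Under Nakagami-m fading, the success probability of a single node
accessing the reader alone. (i) For a near-subregion node (`r` with density
`2r/(R₂² − R₁²)` on `[R₁, R₂]`, reflection coefficient `ξ₁`) and (ii) for a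
far-subregion node (`r` with density `2r/(R² − R₂²)` on `[R₂, R]`, reflection
coefficient `ξ₂`), the probability that `P_T·ξ·g²·r^{−2α} ≥ γ·𝒩` is the stated
incomplete-gamma expression with `x = 𝒩γ/(P_T ξ)`. Probabilities are expressed as
double integrals of the joint density of `g` (Gamma) and `r` over the event. -/
theorem backcom_fading_alone_success_probability
    (m α R₁ R₂ R PT Noise γ ξ₁ ξ₂ : ℝ)
    (hm : 0 < m) (hα : 0 < α) (h0 : 0 < R₁) (h12 : R₁ < R₂) (h2R : R₂ < R)
    (hPT : 0 < PT) (hNoise : 0 < Noise) (hγ : 0 < γ) (hξ1 : 0 < ξ₁) (hξ2 : 0 < ξ₂) :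
    (∫ g in Set.Ioi (0 : ℝ), ∫ r in R₁..R₂,
        if γ * Noise ≤ PT * ξ₁ * (g ^ 2 * r ^ (-(2 * α)))
        then m ^ m * g ^ (m - 1) * Real.exp (-m * g) / Real.Gamma m *
          (2 * r / (R₂ ^ 2 - R₁ ^ 2)) else 0) =
      (R₂ ^ 2 * uGamma m (m * R₂ ^ α * Real.sqrt (Noise * γ / (PT * ξ₁)))
        - R₁ ^ 2 * uGamma m (m * R₁ ^ α * Real.sqrt (Noise * γ / (PT * ξ₁)))
        + (m * Real.sqrt (Noise * γ / (PT * ξ₁))) ^ (-(2 / α)) *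
          gGamma (m + 2 / α) (m * R₁ ^ α * Real.sqrt (Noise * γ / (PT * ξ₁)))
            (m * R₂ ^ α * Real.sqrt (Noise * γ / (PT * ξ₁)))) /
        ((R₂ ^ 2 - R₁ ^ 2) * Real.Gamma m) ∧
    (∫ g in Set.Ioi (0 : ℝ), ∫ r in R₂..R,
        if γ * Noise ≤ PT * ξ₂ * (g ^ 2 * r ^ (-(2 * α)))
        then m ^ m * g ^ (m - 1) * Real.exp (-m * g) / Real.Gamma m *
          (2 * r / (R ^ 2 - R₂ ^ 2)) else 0) =
      (R ^ 2 * uGamma m (m * R ^ α * Real.sqrt (Noise * γ / (PT * ξ₂)))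
        - R₂ ^ 2 * uGamma m (m * R₂ ^ α * Real.sqrt (Noise * γ / (PT * ξ₂)))
        + (m * Real.sqrt (Noise * γ / (PT * ξ₂))) ^ (-(2 / α)) *
          gGamma (m + 2 / α) (m * R₂ ^ α * Real.sqrt (Noise * γ / (PT * ξ₂)))
            (m * R ^ α * Real.sqrt (Noise * γ / (PT * ξ₂)))) /
        ((R ^ 2 - R₂ ^ 2) * Real.Gamma m) :=
  ⟨key m α R₁ R₂ PT Noise γ ξ₁ hm hα h0 h12 hPT hNoise hγ hξ1,
   key m α R₂ R PT Noise γ ξ₂ hm hα (lt_trans h0 h12) h2R hPT hNoise hγ hξ2⟩
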